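/- Let H be a standard subspace and U a unitary with UH ⊆ H such that B_U := U*Δ_H^{1/2} is self-adjoint. Then U = U* and UH = H. -/

import Mathlib

open Complex Submodule Filter Topology

variable {E : Type*} [NormedAddCommGroup E] [InnerProductSpace ℂ E]

/-- Multiplication by `i` as a real-linear map. -/
noncomputable def mulI (E : Type*) [NormedAddCommGroup E] [InnerProductSpace ℂ E] :
    E →ₗ[ℝ] E where
  toFun x := (Complex.I : ℂ) • x
  map_add' := fun x y => smul_add Complex.I x y
  map_smul' := fun r x => smul_comm Complex.I r x

/-- `H + iH` as a real submodule. -/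
noncomputable def cspan (H : Submodule ℝ E) : Submodule ℝ E := H ⊔ H.map (mulI E)

/-- The symplectic complement `K' = {v : Im ⟨v, k⟩ = 0 ∀ k ∈ K}`. -/
noncomputable def sympl (K : Submodule ℝ E) : Submodule ℝ E where
  carrier := {v : E | ∀ k ∈ K, (inner ℂ v k : ℂ).im = 0}
  add_mem' := by
    intro a b ha hb k hk
    simp only [Set.mem_setOf_eq] at *
    rw [inner_add_left, Complex.add_im, ha k hk, hb k hk, add_zero]
  zero_mem' := by intro k hk; simp
  smul_mem' := by
    intro c v hv k hk
    simp only [Set.mem_setOf_eq] at *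
    have h : (c • v : E) = ((c : ℂ)) • v := by
      simp [Complex.coe_smul]
    rw [h, inner_smul_left]
    simp [hv k hk]

/-- The real-orthogonal complement `{v : Re ⟨v, k⟩ = 0 ∀ k ∈ K}`. -/
noncomputable def realPerp (K : Submodule ℝ E) : Submodule ℝ E where
  carrier := {v : E | ∀ k ∈ K, (inner ℂ v k : ℂ).re = 0}
  add_mem' := by
    intro a b ha hb k hk
    simp only [Set.mem_setOf_eq] at *
    rw [inner_add_left, Complex.add_re, ha k hk, hb k hk, add_zero]
  zero_mem' := by intro k hk; simp
  smul_mem' := by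
    intro c v hv k hk
    simp only [Set.mem_setOf_eq] at *
    have h : (c • v : E) = ((c : ℂ)) • v := by
      simp [Complex.coe_smul]
    rw [h, inner_smul_left]
    simp [hv k hk]

/-- A standard subspace: closed, cyclic and separating real subspace. -/
structure IsStandardSubspace (H : Submodule ℝ E) : Prop where
  isClosed : IsClosed (H : Set E)
  cyclic : Dense ((cspan H : Submodule ℝ E) : Set E)
  separating : H ⊓ H.map (mulI E) = ⊥

/-- Scalar multiplication by a complex number as a real-linear map. -/
noncomputable def smulC (E : Type*) [NormedAddCommGroup E] [InnerProductSpace ℂ E]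
    (mu : ℂ) : E →ₗ[ℝ] E where
  toFun x := mu • x
  map_add' := fun x y => smul_add mu x y
  map_smul' := fun r x => smul_comm mu r x

/-!
On `D = H + iH` put `T = J S`, the operator `Δ_H^{1/2}`; it is positive and symmetric. Symmetry
of `B = U* T` gives `T U = U* T` on `D`, and self-adjointness of `B` gives `U* D ⊆ D`. For
`x ∈ D` let `c k = ⟪T Uᵏ x, Uᵏ x⟫`. Since `⟪T u_{k+1}, u_{k+1}⟫ = ⟪T u_k, u_{k+2}⟫`, the
Cauchy–Schwarz inequality for the positive form `⟪T ·, ·⟫` makes `c` log-convex, and it is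
bounded because `U` is unitary, so `c` is nonincreasing. Running this for `U` and for `U*` gives
`⟪T U x, U x⟫ = ⟪T x, x⟫`, whence `y = U² x - x` satisfies `⟪T y, y⟫ = 0`, so `T y = 0` and
`y = 0`. This replaces the uniqueness of the polar decomposition of `B`: `U² = 1` on the dense
set `D`, hence everywhere, and `U = U*`, `U H = H` follow.
-/

open scoped InnerProductSpace ComplexConjugate

theorem antitone_of_sq_le_mul_of_bddAbove {c : ℕ → ℝ} (hc₀ : ∀ k, 0 ≤ c k)
    (hc : BddAbove (Set.range c)) (hlog : ∀ k, c (k + 1) ^ 2 ≤ c k * c (k + 2)) :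
    Antitone c := by
  refine antitone_nat_of_succ_le fun n => ?_
  by_contra! hn
  have hpos : 0 < c n := (hc₀ n).lt_of_ne' fun h => by
    have := hlog n
    rw [h, zero_mul] at this
    nlinarith
  set r := c (n + 1) / c n
  have hr : 1 < r := (one_lt_div hpos).mpr hn
  have hgrowth : ∀ k, r ^ k * c n ≤ c (n + k) ∧ r * c (n + k) ≤ c (n + k + 1) := by
    intro k
    induction k with
    | zero => exact ⟨by simp, by simp [r, div_mul_cancel₀ _ hpos.ne']⟩
    | succ k ih =>
      obtain ⟨ih₁, ih₂⟩ := ih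
      have hk : 0 < c (n + k) := (mul_pos (pow_pos (by linarith) k) hpos).trans_le ih₁
      show r ^ (k + 1) * c n ≤ c (n + k + 1) ∧ r * c (n + k + 1) ≤ c (n + k + 2)
      refine ⟨by rw [pow_succ', mul_assoc]; nlinarith, le_of_mul_le_mul_left ?_ hk⟩
      nlinarith [hlog (n + k), hc₀ (n + k + 1)]
  obtain ⟨M, hM⟩ := hc
  obtain ⟨k, hk⟩ := pow_unbounded_of_one_lt (M / c n) hr
  have := (hgrowth k).1.trans (hM ⟨n + k, rfl⟩)
  rw [div_lt_iff₀ hpos] at hk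
  linarith

def IsSymmetricOn (D : Set E) (B : E → E) : Prop :=
  ∀ u ∈ D, ∀ v ∈ D, ⟪B u, v⟫_ℂ = ⟪u, B v⟫_ℂ

/-- A symmetric `B` with `Ran (B ± i) = E` is self-adjoint: the hypothesis on `x` says that `x`
lies in the domain of the adjoint of `B`. -/
theorem IsSymmetricOn.mem_of_forall_inner_eq {D : Set E} {B : E → E} (hB : IsSymmetricOn D B)
    (hadd : ∀ w, ∃ v ∈ D, B v + I • v = w) (hsub : ∀ w, ∃ v ∈ D, B v - I • v = w)
    {x z : E} (hxz : ∀ u ∈ D, ⟪B u, x⟫_ℂ = ⟪u, z⟫_ℂ) : x ∈ D := by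
  obtain ⟨v, hv, hvz⟩ := hsub (z - I • x)
  have horth : ∀ u ∈ D, ⟪B u + I • u, x - v⟫_ℂ = 0 := by
    intro u hu
    have : ⟪B u + I • u, x - v⟫_ℂ = ⟪u, z - I • x - (B v - I • v)⟫_ℂ := by
      simp only [inner_add_left, inner_sub_right, inner_smul_left, inner_smul_right,
        hxz u hu, hB u hu v hv, conj_I]
      ring
    rw [this, hvz, sub_self, inner_zero_right]
  obtain ⟨u, hu, hux⟩ := hadd (x - v)
  have := horth u hu
  rw [hux, inner_self_eq_zero, sub_eq_zero] at this
  exact this ▸ hv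

structure IsPositiveOn (D : Submodule ℂ E) (T : E → E) : Prop where
  isLinearMap : IsLinearMap ℂ fun x : D => T x
  isSymmetricOn : IsSymmetricOn (D : Set E) T
  re_inner_self_nonneg : ∀ x ∈ D, 0 ≤ (⟪T x, x⟫_ℂ).re

namespace IsPositiveOn

variable {D : Submodule ℂ E} {T : E → E}

theorem norm_inner_sq_le (hT : IsPositiveOn D T) {x y : E} (hx : x ∈ D) (hy : y ∈ D) :
    ‖⟪T x, y⟫_ℂ‖ ^ 2 ≤ (⟪T x, x⟫_ℂ).re * (⟪T y, y⟫_ℂ).re := by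
  let core : PreInnerProductSpace.Core ℂ D :=
    { inner u v := ⟪T u, (v : E)⟫_ℂ
      conj_inner_symm u v := by rw [hT.isSymmetricOn v v.2 u u.2, inner_conj_symm]
      re_inner_nonneg u := hT.re_inner_self_nonneg u u.2
      add_left u v w := by
        change ⟪T ↑(u + v), _⟫_ℂ = _
        rw [hT.isLinearMap.map_add, inner_add_left]
      smul_left u v a := by
        change ⟪T ↑(a • u), _⟫_ℂ = _
        rw [hT.isLinearMap.map_smul, inner_smul_left] }
  have := InnerProductSpace.Core.inner_mul_inner_self_le (c := core) ⟨x, hx⟩ ⟨y, hy⟩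
  rwa [InnerProductSpace.Core.norm_inner_symm (c := core) ⟨y, hy⟩, ← sq] at this

theorem re_inner_map_le (hT : IsPositiveOn D T) (W : E ≃ₗᵢ[ℂ] E) (hWD : ∀ x ∈ D, W x ∈ D)
    (hTW : ∀ x ∈ D, T (W x) = W.symm (T x)) {x : E} (hx : x ∈ D) :
    (⟪T (W x), W x⟫_ℂ).re ≤ (⟪T x, x⟫_ℂ).re := by
  set u : ℕ → E := fun k => W^[k] x
  have hu_succ : ∀ k, u (k + 1) = W (u k) := fun k => Function.iterate_succ_apply' W k x
  have hu : ∀ k, u k ∈ D := by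
    intro k
    induction k with
    | zero => exact hx
    | succ k ih => rw [hu_succ]; exact hWD _ ih
  have hnorm : ∀ k, ‖u k‖ = ‖x‖ ∧ ‖T (u k)‖ = ‖T x‖ := by
    intro k
    induction k with
    | zero => exact ⟨rfl, rfl⟩
    | succ k ih => rw [hu_succ, hTW _ (hu k), W.norm_map, W.symm.norm_map]; exact ih
  have hbdd : BddAbove (Set.range fun k => (⟪T (u k), u k⟫_ℂ).re) := by
    refine ⟨‖T x‖ * ‖x‖, ?_⟩
    rintro _ ⟨k, rfl⟩
    calc (⟪T (u k), u k⟫_ℂ).re ≤ ‖⟪T (u k), u k⟫_ℂ‖ := Complex.re_le_norm _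
      _ ≤ ‖T (u k)‖ * ‖u k‖ := norm_inner_le_norm _ _
      _ = ‖T x‖ * ‖x‖ := by rw [(hnorm k).1, (hnorm k).2]
  have hlog : ∀ k, (⟪T (u (k + 1)), u (k + 1)⟫_ℂ).re ^ 2 ≤
      (⟪T (u k), u k⟫_ℂ).re * (⟪T (u (k + 2)), u (k + 2)⟫_ℂ).re := by
    intro k
    calc (⟪T (u (k + 1)), u (k + 1)⟫_ℂ).re ^ 2 ≤ ‖⟪T (u (k + 1)), u (k + 1)⟫_ℂ‖ ^ 2 :=
          sq_le_sq.mpr ((Complex.abs_re_le_norm _).trans (le_abs_self _))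
      _ = ‖⟪T (u k), u (k + 2)⟫_ℂ‖ ^ 2 := by
          rw [hu_succ (k + 1), hu_succ k, hTW _ (hu k), W.symm.inner_map_eq_flip, W.symm_symm]
      _ ≤ _ := hT.norm_inner_sq_le (hu k) (hu (k + 2))
  exact antitone_of_sq_le_mul_of_bddAbove (fun k => hT.re_inner_self_nonneg _ (hu k)) hbdd hlog
    zero_le_one

theorem re_inner_map_eq (hT : IsPositiveOn D T) (W : E ≃ₗᵢ[ℂ] E) (hWD : ∀ x ∈ D, W x ∈ D)
    (hWD' : ∀ x ∈ D, W.symm x ∈ D) (hTW : ∀ x ∈ D, T (W x) = W.symm (T x)) {x : E}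
    (hx : x ∈ D) : (⟪T (W x), W x⟫_ℂ).re = (⟪T x, x⟫_ℂ).re := by
  have hTW' : ∀ x ∈ D, T (W.symm x) = W.symm.symm (T x) := fun x hx => by
    have := hTW _ (hWD' x hx)
    rw [W.apply_symm_apply] at this
    rw [W.symm_symm, this, W.apply_symm_apply]
  refine (hT.re_inner_map_le W hWD hTW hx).antisymm ?_
  simpa using hT.re_inner_map_le W.symm hWD' hTW' (hWD x hx)

theorem map_map_eq_self (hT : IsPositiveOn D T) (hD : Dense (D : Set E))
    (hinj : ∀ x ∈ D, T x = 0 → x = 0) (W : E ≃ₗᵢ[ℂ] E) (hWD : ∀ x ∈ D, W x ∈ D)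
    (hWD' : ∀ x ∈ D, W.symm x ∈ D) (hTW : ∀ x ∈ D, T (W x) = W.symm (T x)) (x : E) :
    W (W x) = x := by
  suffices h : ∀ x ∈ D, W (W x) = x from
    congrFun (Continuous.ext_on hD (W.continuous.comp W.continuous) continuous_id h) x
  intro x hx
  have hWx := hWD x hx
  have hWWx := hWD _ hWx
  have hy : W (W x) - x ∈ D := sub_mem hWWx hx
  have hq : (⟪T (W (W x) - x), W (W x) - x⟫_ℂ).re = 0 := by
    have h₁ := hT.re_inner_map_eq W hWD hWD' hTW hWx
    have h₂ := hT.re_inner_map_eq W hWD hWD' hTW hx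
    have h₃ : ⟪T (W x), W x⟫_ℂ = ⟪T x, W (W x)⟫_ℂ := by
      rw [hTW x hx, W.symm.inner_map_eq_flip, W.symm_symm]
    have h₄ : (⟪T (W (W x)), x⟫_ℂ).re = (⟪T x, W (W x)⟫_ℂ).re := by
      rw [hT.isSymmetricOn _ hWWx _ hx, ← inner_conj_symm, Complex.conj_re]
    have hsub : T (W (W x) - x) = T (W (W x)) - T x :=
      (hT.isLinearMap.mk' _).map_sub ⟨_, hWWx⟩ ⟨x, hx⟩
    rw [hsub, inner_sub_left, inner_sub_right, inner_sub_right]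
    simp only [Complex.sub_re]
    linarith [congrArg Complex.re h₃]
  have hTy : T (W (W x) - x) = 0 := hD.eq_zero_of_inner_left ℂ fun z hz => by
    have := hT.norm_inner_sq_le hy hz
    rw [hq, zero_mul] at this
    exact norm_eq_zero.mp (pow_eq_zero_iff two_ne_zero |>.mp (this.antisymm (sq_nonneg _)))
  exact sub_eq_zero.mp (hinj _ hy hTy)

end IsPositiveOn

section StandardSubspace

variable {H : Submodule ℝ E}

theorem mem_cspan_iff {v : E} : v ∈ cspan H ↔ ∃ h₁ ∈ H, ∃ h₂ ∈ H, h₁ + I • h₂ = v := by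
  simp [cspan, Submodule.mem_sup, mulI]

theorem smul_add_I_smul (c : ℂ) (a b : E) :
    c • (a + I • b) = (c.re • a - c.im • b) + I • (c.im • a + c.re • b) := by
  conv_lhs => rw [← Complex.re_add_im c]
  simp only [← Complex.coe_smul]
  linear_combination (norm := module) I_mul_I • (c.im : ℂ) • b

theorem smul_mem_cspan (c : ℂ) {v : E} (hv : v ∈ cspan H) : c • v ∈ cspan H := by
  obtain ⟨h₁, hh₁, h₂, hh₂, rfl⟩ := mem_cspan_iff.mp hv
  rw [smul_add_I_smul]
  exact mem_cspan_iff.mpr ⟨_, sub_mem (H.smul_mem _ hh₁) (H.smul_mem _ hh₂),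
    _, add_mem (H.smul_mem _ hh₁) (H.smul_mem _ hh₂), rfl⟩

theorem map_mem_cspan {F : Type*} [FunLike F E E] [LinearMapClass F ℂ E E] (f : F)
    (hf : ∀ h ∈ H, f h ∈ H) {v : E} (hv : v ∈ cspan H) : f v ∈ cspan H := by
  obtain ⟨h₁, hh₁, h₂, hh₂, rfl⟩ := mem_cspan_iff.mp hv
  rw [map_add, map_smul]
  exact mem_cspan_iff.mpr ⟨_, hf _ hh₁, _, hf _ hh₂, rfl⟩

noncomputable def cspanComplex (H : Submodule ℝ E) : Submodule ℂ E :=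
  { (cspan H).toAddSubmonoid with smul_mem' := fun c _ hv => smul_mem_cspan c hv }

variable {S : E → E}

theorem map_add_of_mem_cspan (hS : ∀ h₁ ∈ H, ∀ h₂ ∈ H, S (h₁ + I • h₂) = h₁ - I • h₂) {v w : E}
    (hv : v ∈ cspan H) (hw : w ∈ cspan H) : S (v + w) = S v + S w := by
  obtain ⟨a₁, ha₁, b₁, hb₁, rfl⟩ := mem_cspan_iff.mp hv
  obtain ⟨a₂, ha₂, b₂, hb₂, rfl⟩ := mem_cspan_iff.mp hw
  rw [show a₁ + I • b₁ + (a₂ + I • b₂) = (a₁ + a₂) + I • (b₁ + b₂) by module,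
    hS _ (add_mem ha₁ ha₂) _ (add_mem hb₁ hb₂), hS _ ha₁ _ hb₁, hS _ ha₂ _ hb₂]
  module

theorem map_smul_of_mem_cspan (hS : ∀ h₁ ∈ H, ∀ h₂ ∈ H, S (h₁ + I • h₂) = h₁ - I • h₂) (c : ℂ)
    {v : E} (hv : v ∈ cspan H) : S (c • v) = conj c • S v := by
  obtain ⟨a, ha, b, hb, rfl⟩ := mem_cspan_iff.mp hv
  rw [smul_add_I_smul, hS _ (sub_mem (H.smul_mem _ ha) (H.smul_mem _ hb))
      _ (add_mem (H.smul_mem _ ha) (H.smul_mem _ hb)), hS _ ha _ hb,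
    show a - I • b = a + I • -b by module, smul_add_I_smul, conj_re, conj_im]
  module

theorem apply_apply_of_mem_cspan (hS : ∀ h₁ ∈ H, ∀ h₂ ∈ H, S (h₁ + I • h₂) = h₁ - I • h₂)
    {v : E} (hv : v ∈ cspan H) : S (S v) = v := by
  obtain ⟨a, ha, b, hb, rfl⟩ := mem_cspan_iff.mp hv
  rw [hS _ ha _ hb, sub_eq_add_neg, ← smul_neg, hS _ ha _ (neg_mem hb), smul_neg, sub_neg_eq_add]

theorem isPositiveOn_cspanComplex (hS : ∀ h₁ ∈ H, ∀ h₂ ∈ H, S (h₁ + I • h₂) = h₁ - I • h₂)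
    {J : E → E} (hJadd : ∀ x y : E, J (x + y) = J x + J y)
    (hJsmul : ∀ (c : ℂ) (x : E), J (c • x) = conj c • J x)
    (hpos : ∀ v ∈ cspan H, 0 ≤ (⟪v, J (S v)⟫_ℂ).re)
    (hsymm : ∀ v ∈ cspan H, ∀ w ∈ cspan H, ⟪J (S v), w⟫_ℂ = ⟪v, J (S w)⟫_ℂ) :
    IsPositiveOn (cspanComplex H) fun v => J (S v) where
  isLinearMap :=
    { map_add v w := by
        change J (S (v + w : E)) = J (S v) + J (S w)
        rw [map_add_of_mem_cspan hS v.2 w.2, hJadd]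
      map_smul c v := by
        change J (S (c • v : E)) = c • J (S v)
        rw [map_smul_of_mem_cspan hS c v.2, hJsmul, conj_conj] }
  isSymmetricOn := hsymm
  re_inner_self_nonneg v hv := by
    rw [← inner_conj_symm, conj_re]
    exact hpos v hv

end StandardSubspace

theorem stmt17_general {E : Type*} [NormedAddCommGroup E] [InnerProductSpace ℂ E]
    (H : Submodule ℝ E) (hH : IsStandardSubspace H)
    (S : E → E)
    (hS : ∀ h₁ ∈ H, ∀ h₂ ∈ H, S (h₁ + Complex.I • h₂) = h₁ - Complex.I • h₂)
    (J : E → E)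
    (hJadd : ∀ x y : E, J (x + y) = J x + J y)
    (hJsmul : ∀ (c : ℂ) (x : E), J (c • x) = (starRingEnd ℂ) c • J x)
    (hJinv : ∀ x : E, J (J x) = x)
    (hpos : ∀ v ∈ (cspan H : Submodule ℝ E),
        0 ≤ (inner ℂ v (J (S v)) : ℂ).re ∧ (inner ℂ v (J (S v)) : ℂ).im = 0)
    (hsymm : ∀ v ∈ (cspan H : Submodule ℝ E), ∀ w ∈ (cspan H : Submodule ℝ E),
        (inner ℂ (J (S v)) w : ℂ) = inner ℂ v (J (S w)))
    (U : E ≃ₗᵢ[ℂ] E) (hUH : ∀ h ∈ H, U h ∈ H)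
    (hBsymm : ∀ v ∈ (cspan H : Submodule ℝ E), ∀ w ∈ (cspan H : Submodule ℝ E),
        (inner ℂ (U.symm (J (S v))) w : ℂ) = inner ℂ v (U.symm (J (S w))))
    (hBranp : ∀ w : E, ∃ v ∈ (cspan H : Submodule ℝ E),
        U.symm (J (S v)) + Complex.I • v = w)
    (hBranm : ∀ w : E, ∃ v ∈ (cspan H : Submodule ℝ E),
        U.symm (J (S v)) - Complex.I • v = w) :
    (∀ x : E, U x = U.symm x) ∧ (⇑U '' (H : Set E) = (H : Set E)) := by
  set D := cspanComplex H
  set T : E → E := fun v => J (S v)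
  have hT : IsPositiveOn D T :=
    isPositiveOn_cspanComplex hS hJadd hJsmul (fun v hv => (hpos v hv).1) hsymm
  have hinj : ∀ x ∈ D, T x = 0 → x = 0 := fun x hx hTx => by
    have hJ0 : J 0 = 0 := by simpa using hJsmul 0 0
    have hS0 : S 0 = 0 := by simpa using hS 0 H.zero_mem 0 H.zero_mem
    rw [← apply_apply_of_mem_cspan hS hx, ← hJinv (S x), show J (S x) = 0 from hTx, hJ0, hS0]
  have hUD : ∀ x ∈ D, U x ∈ D := fun x hx => map_mem_cspan U hUH hx
  have hTU : ∀ x ∈ D, T (U x) = U.symm (T x) := fun x hx =>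
    hH.cyclic.eq_of_inner_right ℂ fun v hv => by
      rw [← hsymm v hv _ (hUD x hx), ← hBsymm v hv x hx, U.symm.inner_map_eq_flip, U.symm_symm]
  have hUsD : ∀ x ∈ D, U.symm x ∈ D := fun x hx =>
    IsSymmetricOn.mem_of_forall_inner_eq (B := fun v => U.symm (T v)) hBsymm hBranp hBranm
      fun u hu => by rw [U.symm.inner_map_map]; exact hsymm u hu x hx
  have hUU : ∀ x, U (U x) = x := hT.map_map_eq_self hH.cyclic hinj U hUD hUsD hTU
  refine ⟨fun x => by rw [← U.symm_apply_apply (U x), hUU], ?_⟩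
  exact (Set.image_subset_iff.mpr hUH).antisymm fun h hh => ⟨U h, hUH h hh, hUU h⟩

/-- If `B_U = U* Δ_H^{1/2}` is selfadjoint (symmetric, with `Ran (B_U ± i) = ℋ`),
then `U = U*` and `UH = H`. -/
theorem stmt17 {E : Type*} [NormedAddCommGroup E] [InnerProductSpace ℂ E] [CompleteSpace E]
    (H : Submodule ℝ E) (hH : IsStandardSubspace H)
    (S : E → E)
    (hS : ∀ h₁ ∈ H, ∀ h₂ ∈ H, S (h₁ + Complex.I • h₂) = h₁ - Complex.I • h₂)
    (J : E → E)
    (hJadd : ∀ x y : E, J (x + y) = J x + J y)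
    (hJsmul : ∀ (c : ℂ) (x : E), J (c • x) = (starRingEnd ℂ) c • J x)
    (hJinv : ∀ x : E, J (J x) = x)
    (hJinner : ∀ x y : E, (inner ℂ (J x) (J y) : ℂ) = inner ℂ y x)
    (hpos : ∀ v ∈ (cspan H : Submodule ℝ E),
        0 ≤ (inner ℂ v (J (S v)) : ℂ).re ∧ (inner ℂ v (J (S v)) : ℂ).im = 0)
    (hsymm : ∀ v ∈ (cspan H : Submodule ℝ E), ∀ w ∈ (cspan H : Submodule ℝ E),
        (inner ℂ (J (S v)) w : ℂ) = inner ℂ v (J (S w)))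
    (hran : ∀ w : E, ∃ v ∈ (cspan H : Submodule ℝ E), v + J (S v) = w)
    (U : E ≃ₗᵢ[ℂ] E) (hUH : ∀ h ∈ H, U h ∈ H)
    (hBsymm : ∀ v ∈ (cspan H : Submodule ℝ E), ∀ w ∈ (cspan H : Submodule ℝ E),
        (inner ℂ (U.symm (J (S v))) w : ℂ) = inner ℂ v (U.symm (J (S w))))
    (hBranp : ∀ w : E, ∃ v ∈ (cspan H : Submodule ℝ E),
        U.symm (J (S v)) + Complex.I • v = w)
    (hBranm : ∀ w : E, ∃ v ∈ (cspan H : Submodule ℝ E),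
        U.symm (J (S v)) - Complex.I • v = w) :
    (∀ x : E, U x = U.symm x) ∧ (⇑U '' (H : Set E) = (H : Set E)) :=
  stmt17_general H hH S hS J hJadd hJsmul hJinv hpos hsymm U hUH hBsymm hBranp hBranm
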